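/- Purification formula for the optimized non-abelian one-point fidelity: let ρ be a density matrix on a finite-dimensional space H of dimension D, let Ψ ∈ H ⊗ H be a purification of ρ (a unit vector with Tr₂ |Ψ⟩⟨Ψ| = ρ, where Tr₂ is the partial trace over the second factor), let n ≥ 1, and let (O_α)_{α ∈ Fin n} be matrices on H. Then sup { F(ρ, (Σ_α v_α O_α) ρ (Σ_α v_α O_α)†) : v ∈ ℂⁿ, Σ_α |v_α|² = 1 } = sup { √( Σ_α |⟨Ψ, (O_α ⊗ U) Ψ⟩|² ) : U a D × D unitary matrix }. -/

import Mathlib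

/-!
Let `X` be the coefficient matrix of `Ψ`, `X a b = Ψ (a, b)`. Being a purification of `ρ` means
`X Xᴴ = ρ`, so polar decomposition gives `X = √ρ W` with `W` unitary, and then
`⟨Ψ, (O ⊗ U) Ψ⟩ = tr (O X Uᵀ Xᴴ) = tr (√ρ O √ρ · W Uᵀ Wᴴ)`. On the other side
`F(ρ, M ρ Mᴴ) = ‖√ρ M √ρ‖₁`, and the trace norm `‖B‖₁` is the maximum of `|tr (B V)|` over
unitaries `V`. Both suprema are therefore the supremum of `|∑ α, v α * tr (√ρ O_α √ρ V)|` over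
unit vectors `v` and unitaries `V`: maximizing first over `V` gives the left-hand side, first over
`v` (Cauchy–Schwarz, which is attained) the right-hand side.
-/

noncomputable section

open scoped Matrix Kronecker ComplexOrder

/-- The positive semidefinite square root of a matrix (defaults to `0` if not PSD). -/
noncomputable def matSqrt {n : Type*} [Fintype n] [DecidableEq n] (M : Matrix n n ℂ) :
    Matrix n n ℂ :=
  open scoped Classical in
  if h : M.PosSemidef then
    h.1.eigenvectorUnitary.1 * Matrix.diagonal ((↑) ∘ (√·) ∘ h.1.eigenvalues) *
      (star h.1.eigenvectorUnitary : Matrix n n ℂ) else 0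

/-- The fidelity `F(ρ, σ) = tr √(√ρ σ √ρ)` of two PSD matrices. -/
noncomputable def fidelity {n : Type*} [Fintype n] [DecidableEq n] (ρ σ : Matrix n n ℂ) : ℝ :=
  (matSqrt (matSqrt ρ * σ * matSqrt ρ)).trace.re

/-- The ℓ²→ℓ² operator norm of a complex matrix. -/
noncomputable def opNorm {m n : Type*} [Fintype m] [Fintype n] [DecidableEq n]
    (M : Matrix m n ℂ) : ℝ :=
  ‖(Matrix.toEuclideanLin.trans LinearMap.toContinuousLinearMap) M‖

/-- Partial trace over the second tensor factor. -/
noncomputable def ptraceB {A B : Type*} [Fintype B]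
    (ρ : Matrix (A × B) (A × B) ℂ) : Matrix A A ℂ :=
  Matrix.of fun a a' => ∑ b : B, ρ (a, b) (a', b)


namespace Matrix

section RCLike

variable {𝕜 n : Type*} [RCLike 𝕜] [Fintype n] [DecidableEq n]

theorem norm_toEuclideanLin_eq_of_conjTranspose_mul_self_eq {A B : Matrix n n 𝕜}
    (h : Aᴴ * A = Bᴴ * B) (x : EuclideanSpace 𝕜 n) :
    ‖toEuclideanLin A x‖ = ‖toEuclideanLin B x‖ := by
  have norm_sq : ∀ C : Matrix n n 𝕜,
      (‖toEuclideanLin C x‖ ^ 2 : 𝕜) = inner 𝕜 x (toEuclideanLin (Cᴴ * C) x) := fun C => by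
    rw [← inner_self_eq_norm_sq_to_K, ← LinearMap.adjoint_inner_right,
      ← toEuclideanLin_conjTranspose_eq_adjoint]
    simp [toLpLin_apply, mulVec_mulVec]
  have hsq : (‖toEuclideanLin A x‖ ^ 2 : 𝕜) = ‖toEuclideanLin B x‖ ^ 2 := by
    rw [norm_sq, norm_sq, h]
  exact (sq_eq_sq₀ (norm_nonneg _) (norm_nonneg _)).mp (by exact_mod_cast hsq)

open EuclideanSpace in
theorem exists_unitary_mul_eq_of_conjTranspose_mul_self_eq {A B : Matrix n n 𝕜}
    (h : Aᴴ * A = Bᴴ * B) : ∃ V ∈ unitaryGroup n 𝕜, A = V * B := by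
  set f := toEuclideanLin B
  set g := toEuclideanLin A
  have hnorm := norm_toEuclideanLin_eq_of_conjTranspose_mul_self_eq h
  have hker : LinearMap.ker f ≤ LinearMap.ker g := fun x hx => by
    rw [LinearMap.mem_ker, ← norm_eq_zero, hnorm, norm_eq_zero]; exact hx
  -- `B x ↦ A x` is a well-defined isometry on the range of `B`; extend it to the whole space.
  let L : LinearMap.range f →ₗᵢ[𝕜] EuclideanSpace 𝕜 n :=
    { toLinearMap := (LinearMap.ker f).liftQ g hker ∘ₗ f.quotKerEquivRange.symm.toLinearMap
      norm_map' := by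
        rintro ⟨s, hs⟩
        obtain ⟨x, rfl⟩ := LinearMap.mem_range.mp hs
        simpa [LinearMap.quotKerEquivRange_symm_apply_image] using hnorm x }
  have hL : ∀ x, L.extend (f x) = g x := fun x => by
    simpa [L, LinearMap.quotKerEquivRange_symm_apply_image] using
      L.extend_apply ⟨f x, LinearMap.mem_range_self f x⟩
  let V := L.extend.toLinearIsometryEquiv rfl
  refine ⟨LinearMap.toMatrix (basisFun n 𝕜).toBasis (basisFun n 𝕜).toBasis V.toLinearMap,
    V.toMatrix_mem_unitaryGroup _ _, toEuclideanLin.injective ?_⟩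
  ext1 x
  rw [toEuclideanLin_eq_toLin_orthonormal, toLin_mul _ (basisFun n 𝕜).toBasis,
    LinearMap.comp_apply, toLin_toMatrix]
  exact (hL x).symm

open scoped MatrixOrder

theorem exists_unitary_eq_sqrt_mul (A : Matrix n n 𝕜) :
    ∃ W ∈ unitaryGroup n 𝕜, A = CFC.sqrt (A * Aᴴ) * W := by
  set S := CFC.sqrt (A * Aᴴ)
  have hS : Sᴴ = S := (nonneg_iff_posSemidef.mp (CFC.sqrt_nonneg _)).1
  have hSS : S * S = A * Aᴴ :=
    CFC.sqrt_mul_sqrt_self _ (posSemidef_self_mul_conjTranspose A).nonneg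
  obtain ⟨V, hV, hAV⟩ := exists_unitary_mul_eq_of_conjTranspose_mul_self_eq (A := Aᴴ) (B := S)
    (by rw [conjTranspose_conjTranspose, hS, hSS])
  refine ⟨star V, Unitary.star_mem hV, ?_⟩
  rw [← conjTranspose_conjTranspose A, hAV, conjTranspose_mul, hS, star_eq_conjTranspose]

theorem PosSemidef.norm_trace_mul_unitary_le {P U : Matrix n n 𝕜} (hP : P.PosSemidef)
    (hU : U ∈ unitaryGroup n 𝕜) : ‖(P * U).trace‖ ≤ RCLike.re P.trace := by
  set Q : Matrix n n 𝕜 := (hP.1.eigenvectorUnitary : Matrix n n 𝕜)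
  have hQU : star Q * U * Q ∈ unitaryGroup n 𝕜 :=
    mul_mem (mul_mem (Unitary.star_mem (SetLike.coe_mem _)) hU) (SetLike.coe_mem _)
  have htrace : (P * U).trace = ∑ i, (hP.1.eigenvalues i : 𝕜) * (star Q * U * Q) i i := by
    conv_lhs => rw [hP.1.spectral_theorem, Unitary.conjStarAlgAut_apply]
    rw [mul_assoc, mul_assoc, trace_mul_comm, mul_assoc]
    simp [trace, diagonal_mul, mul_assoc, Q]
  rw [htrace, hP.1.trace_eq_sum_eigenvalues, map_sum]
  refine (norm_sum_le _ _).trans (Finset.sum_le_sum fun i _ => ?_)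
  rw [norm_mul, RCLike.norm_of_nonneg (hP.eigenvalues_nonneg i), RCLike.ofReal_re]
  exact mul_le_of_le_one_right (hP.eigenvalues_nonneg i) (entry_norm_bound_of_unitary hQU i i)

def traceNorm (A : Matrix n n 𝕜) : ℝ :=
  RCLike.re (CFC.sqrt (A * Aᴴ)).trace

theorem isGreatest_norm_trace_mul_unitary (A : Matrix n n 𝕜) :
    IsGreatest ((fun U => ‖(A * U).trace‖) '' unitaryGroup n 𝕜) (traceNorm A) := by
  obtain ⟨W, hW, hA⟩ := exists_unitary_eq_sqrt_mul A
  set P := CFC.sqrt (A * Aᴴ)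
  have hP : P.PosSemidef := nonneg_iff_posSemidef.mp (CFC.sqrt_nonneg _)
  refine ⟨⟨star W, Unitary.star_mem hW, ?_⟩, ?_⟩
  · have hAW : A * star W = P := by rw [hA, mul_assoc, Unitary.mul_star_self_of_mem hW, mul_one]
    change ‖(A * star W).trace‖ = RCLike.re P.trace
    rw [hAW, ← RCLike.ofReal_re (K := 𝕜) ‖_‖, RCLike.norm_of_nonneg' hP.trace_nonneg]
  · rintro _ ⟨U, hU, rfl⟩
    have := hP.norm_trace_mul_unitary_le (mul_mem hW hU)
    rwa [← mul_assoc, ← hA] at this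

end RCLike

section CommRing

variable {R n : Type*} [CommRing R] [StarRing R] [Fintype n]

theorem image_mul_transpose_mul_star_unitaryGroup [DecidableEq n] {W : Matrix n n R}
    (hW : W ∈ unitaryGroup n R) :
    (fun U => W * Uᵀ * star W) '' unitaryGroup n R = unitaryGroup n R := by
  refine Set.Subset.antisymm ?_ fun V hV => ⟨(star W * V * W)ᵀ, ?_, ?_⟩
  · rintro _ ⟨U, hU, rfl⟩
    exact mul_mem (mul_mem hW (transpose_mem_unitaryGroup_iff.mpr hU)) (Unitary.star_mem hW)
  · exact transpose_mem_unitaryGroup_iff.mpr (mul_mem (mul_mem (Unitary.star_mem hW) hV) hW)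
  · simp only [transpose_transpose, ← mul_assoc, Unitary.mul_star_self_of_mem hW, one_mul]
    rw [mul_assoc, Unitary.mul_star_self_of_mem hW, mul_one]

theorem trace_mul_mul_conjTranspose_of_eq_mul {X S W : Matrix n n R} (hX : X = S * W)
    (hS : Sᴴ = S) (M V : Matrix n n R) :
    (M * X * V * Xᴴ).trace = (S * M * S * (W * V * star W)).trace := by
  rw [hX, conjTranspose_mul, hS, ← star_eq_conjTranspose, mul_assoc S M S, mul_assoc S (M * S),
    trace_mul_comm S]
  congr 1
  noncomm_ring

end CommRing

end Matrix

theorem isGreatest_norm_sum_mul {𝕜 κ : Type*} [RCLike 𝕜] [Fintype κ] [Nonempty κ] (t : κ → 𝕜) :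
    IsGreatest ((fun v : κ → 𝕜 => ‖∑ i, v i * t i‖) '' {v | ∑ i, ‖v i‖ ^ 2 = 1})
      (√(∑ i, ‖t i‖ ^ 2)) := by
  have hs_nonneg : 0 ≤ ∑ i, ‖t i‖ ^ 2 := Finset.sum_nonneg fun i _ => sq_nonneg ‖t i‖
  generalize hs : ∑ i, ‖t i‖ ^ 2 = s at hs_nonneg
  refine ⟨?_, ?_⟩
  · rcases hs_nonneg.eq_or_lt with rfl | hs_pos
    · have ht : t = 0 := funext fun i => by
        simpa using (Finset.sum_eq_zero_iff_of_nonneg fun i _ => sq_nonneg ‖t i‖).mp hs i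
      classical
      obtain ⟨i₀⟩ := ‹Nonempty κ›
      exact ⟨Pi.single i₀ 1, by simp [Pi.single_apply, apply_ite], by simp [ht]⟩
    · refine ⟨fun i => star (t i) / (√s : 𝕜), ?_, ?_⟩
      · simp only [Set.mem_ofPred_eq, norm_div, norm_star, RCLike.norm_ofReal, div_pow,
          sq_abs, ← Finset.sum_div, hs, Real.sq_sqrt hs_nonneg]
        exact div_self hs_pos.ne'
      · simp only [div_mul_eq_mul_div, ← Finset.sum_div, RCLike.star_def, RCLike.conj_mul]
        norm_cast
        rw [hs, abs_of_nonneg (by positivity), Real.div_sqrt]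
  · rintro _ ⟨v, hv, rfl⟩
    calc ‖∑ i, v i * t i‖ ≤ ∑ i, ‖v i‖ * ‖t i‖ :=
          (norm_sum_le _ _).trans_eq (by simp only [norm_mul])
      _ ≤ √(∑ i, ‖v i‖ ^ 2) * √(∑ i, ‖t i‖ ^ 2) := Real.sum_mul_le_sqrt_mul_sqrt _ _ _
      _ = √s := by rw [show ∑ i, ‖v i‖ ^ 2 = 1 from hv, Real.sqrt_one, one_mul, hs]

theorem sSup_eq_of_isGreatest {α β γ : Type*} [ConditionallyCompleteLinearOrder γ]
    {p : α → Prop} {q : β → Prop} (f : α → β → γ) {g : α → γ} {h : β → γ}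
    (hg : ∀ a, p a → IsGreatest (f a '' {b | q b}) (g a))
    (hh : ∀ b, q b → IsGreatest ((f · b) '' {a | p a}) (h b)) :
    sSup {c | ∃ a, p a ∧ c = g a} = sSup {c | ∃ b, q b ∧ c = h b} := by
  refine csSup_eq_csSup_of_forall_exists_le ?_ ?_
  · rintro _ ⟨a, ha, rfl⟩
    obtain ⟨b, hb, hab⟩ := (hg a ha).1
    exact ⟨h b, ⟨b, hb, rfl⟩, hab ▸ (hh b hb).2 ⟨a, ha, rfl⟩⟩
  · rintro _ ⟨b, hb, rfl⟩
    obtain ⟨a, ha, hab⟩ := (hh b hb).1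
    exact ⟨g a, ⟨a, ha, rfl⟩, hab ▸ (hg a ha).2 ⟨b, hb, rfl⟩⟩

section Fidelity

open scoped MatrixOrder

variable {ι : Type*} [Fintype ι] [DecidableEq ι]

theorem matSqrt_eq_sqrt {M : Matrix ι ι ℂ} (hM : M.PosSemidef) : matSqrt M = CFC.sqrt M := by
  rw [matSqrt, dif_pos hM, CFC.sqrt_eq_cfc, cfc_nnreal_eq_real _ M hM.nonneg, hM.1.cfc_eq,
    Matrix.IsHermitian.cfc, Unitary.conjStarAlgAut_apply]
  congr 2
  ext i j
  simp only [Matrix.diagonal_apply, Function.comp_apply, Real.coe_sqrt, Real.coe_toNNReal',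
    max_eq_left (hM.eigenvalues_nonneg i)]
  rfl

theorem conjTranspose_matSqrt {M : Matrix ι ι ℂ} (hM : M.PosSemidef) :
    (matSqrt M)ᴴ = matSqrt M := by
  rw [matSqrt_eq_sqrt hM]
  exact (Matrix.nonneg_iff_posSemidef.mp (CFC.sqrt_nonneg M)).1

theorem matSqrt_mul_self {M : Matrix ι ι ℂ} (hM : M.PosSemidef) :
    matSqrt M * matSqrt M = M := by
  rw [matSqrt_eq_sqrt hM]
  exact CFC.sqrt_mul_sqrt_self M hM.nonneg

theorem fidelity_mul_mul_conjTranspose {ρ : Matrix ι ι ℂ} (hρ : ρ.PosSemidef) (M : Matrix ι ι ℂ) :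
    fidelity ρ (M * ρ * Mᴴ) = Matrix.traceNorm (matSqrt ρ * M * matSqrt ρ) := by
  have hS := conjTranspose_matSqrt hρ
  have hSS := matSqrt_mul_self hρ
  have hprod : matSqrt ρ * (M * ρ * Mᴴ) * matSqrt ρ =
      (matSqrt ρ * M * matSqrt ρ) * (matSqrt ρ * M * matSqrt ρ)ᴴ := by
    generalize matSqrt ρ = S at hS hSS ⊢
    subst hSS
    rw [Matrix.conjTranspose_mul, Matrix.conjTranspose_mul, hS]
    noncomm_ring
  rw [fidelity, hprod, matSqrt_eq_sqrt (Matrix.posSemidef_self_mul_conjTranspose _)]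
  rfl

end Fidelity

theorem ptraceB_vecMulVec_star {A B : Type*} [Fintype B] (Ψ : A × B → ℂ) :
    ptraceB (Matrix.vecMulVec Ψ (star Ψ)) =
      Matrix.of (Function.curry Ψ) * (Matrix.of (Function.curry Ψ))ᴴ := by
  ext a a'
  simp [ptraceB, Matrix.mul_apply, Matrix.vecMulVec_apply]

theorem star_dotProduct_kronecker_mulVec {R A B : Type*} [CommSemiring R] [StarRing R]
    [Fintype A] [Fintype B] (O : Matrix A A R) (U : Matrix B B R) (Ψ : A × B → R) :
    star Ψ ⬝ᵥ ((O ⊗ₖ U) *ᵥ Ψ) =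
      (O * Matrix.of (Function.curry Ψ) * Uᵀ * (Matrix.of (Function.curry Ψ))ᴴ).trace := by
  simp only [dotProduct, Matrix.mulVec, Matrix.trace, Matrix.diag, Matrix.mul_apply,
    Matrix.kroneckerMap_apply, Matrix.conjTranspose_apply, Matrix.transpose_apply,
    Matrix.of_apply, Pi.star_apply, Function.curry_apply, Fintype.sum_prod_type,
    Finset.sum_mul, Finset.mul_sum]
  refine Finset.sum_congr rfl fun a _ => Finset.sum_congr rfl fun b _ => ?_
  rw [Finset.sum_comm]
  exact Finset.sum_congr rfl fun d _ => Finset.sum_congr rfl fun c _ => by ring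

open Matrix in
theorem purification_formula_optimized_one_point_general
    {ι : Type*} [Fintype ι] [DecidableEq ι]
    (ρ : Matrix ι ι ℂ) (hρ : ρ.PosSemidef)
    (Ψ : ι × ι → ℂ)
    (hpur : ptraceB (Matrix.vecMulVec Ψ (star Ψ)) = ρ)
    (n : ℕ) (hn : 1 ≤ n) (O : Fin n → Matrix ι ι ℂ) :
    sSup {r : ℝ | ∃ v : Fin n → ℂ, (∑ α, ‖v α‖ ^ 2 = 1) ∧
        r = fidelity ρ ((∑ α, v α • O α) * ρ * (∑ α, v α • O α)ᴴ)} =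
      sSup {r : ℝ | ∃ U : Matrix ι ι ℂ, U ∈ Matrix.unitaryGroup ι ℂ ∧
        r = Real.sqrt (∑ α : Fin n,
              ‖star Ψ ⬝ᵥ ((O α ⊗ₖ U) *ᵥ Ψ)‖ ^ 2)} := by
  have hρX := (ptraceB_vecMulVec_star Ψ).symm.trans hpur
  obtain ⟨W, hW, hXW⟩ := exists_unitary_eq_sqrt_mul (of (Function.curry Ψ))
  rw [hρX, ← matSqrt_eq_sqrt hρ] at hXW
  have hsum : ∀ (v : Fin n → ℂ) U, ∑ α, v α * star Ψ ⬝ᵥ ((O α ⊗ₖ U) *ᵥ Ψ) =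
      (matSqrt ρ * (∑ α, v α • O α) * matSqrt ρ * (W * Uᵀ * star W)).trace := fun v U => by
    rw [← trace_mul_mul_conjTranspose_of_eq_mul hXW (conjTranspose_matSqrt hρ)]
    simp only [star_dotProduct_kronecker_mulVec, Finset.sum_mul, smul_mul_assoc, trace_sum,
      trace_smul, smul_eq_mul]
  have : Nonempty (Fin n) := ⟨⟨0, hn⟩⟩
  refine sSup_eq_of_isGreatest (fun v U => ‖∑ α, v α * star Ψ ⬝ᵥ ((O α ⊗ₖ U) *ᵥ Ψ)‖)
    (fun v _ => ?_) (fun U _ => ?_)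
  · have hmax := isGreatest_norm_trace_mul_unitary (matSqrt ρ * (∑ α, v α • O α) * matSqrt ρ)
    rw [← image_mul_transpose_mul_star_unitaryGroup hW, Set.image_image] at hmax
    simp only [fidelity_mul_mul_conjTranspose hρ, hsum]
    exact hmax
  · exact isGreatest_norm_sum_mul _

/-- **Purification formula for the optimized non-abelian one-point fidelity** (Lemma 9):
the supremum of `F(ρ, (v·O) ρ (v·O)†)` over unit vectors `v` equals the supremum over
unitaries `U` on the purifying factor of `√(Σ_α |⟨Ψ, (O_α ⊗ U) Ψ⟩|²)`. -/
theorem purification_formula_optimized_one_point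
    {ι : Type*} [Fintype ι] [DecidableEq ι]
    (ρ : Matrix ι ι ℂ) (hρ : ρ.PosSemidef) (hρtr : ρ.trace = 1)
    (Ψ : ι × ι → ℂ) (hΨ : ∑ p, ‖Ψ p‖ ^ 2 = 1)
    (hpur : ptraceB (Matrix.vecMulVec Ψ (star Ψ)) = ρ)
    (n : ℕ) (hn : 1 ≤ n) (O : Fin n → Matrix ι ι ℂ) :
    sSup {r : ℝ | ∃ v : Fin n → ℂ, (∑ α, ‖v α‖ ^ 2 = 1) ∧
        r = fidelity ρ ((∑ α, v α • O α) * ρ * (∑ α, v α • O α)ᴴ)} =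
      sSup {r : ℝ | ∃ U : Matrix ι ι ℂ, U ∈ Matrix.unitaryGroup ι ℂ ∧
        r = Real.sqrt (∑ α : Fin n,
              ‖star Ψ ⬝ᵥ ((O α ⊗ₖ U) *ᵥ Ψ)‖ ^ 2)} :=
  purification_formula_optimized_one_point_general ρ hρ Ψ hpur n hn O
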